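/- arXiv:2010.00707 — 3 statements merged into one kernel-verified Lean document; each statement's English description precedes it below -/
import Mathlib

section
/- Let d ≥ 2, p ≥ 2 and m ≥ 2 be integers. Consider the ℚ-vector subspace ℬ_{p,d,m} of ℚ^{d−1} consisting of all tuples (n_0, …, n_{d−2}) of rational numbers such that ∑_{j=0}^{d−2} n_j ζ_d^{j(β+1)} = 0 for every integer β with 0 ≤ β ≤ d−2 and (β+1)/d < 1 − 1/m − 1/p. Then the dimension of ℬ_{p,d,m} over ℚ equals ∑ φ(d'), the sum ranging over all divisors d' of d with d' ≥ 2 and d'(pm − m − p) ≤ pm, where φ is Euler's totient function. -/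
open scoped BigOperators

/-- The standard primitive `d`-th root of unity `exp(2πi/d)`. -/
noncomputable def zeta (d : ℕ) : ℂ := Complex.exp (2 * Real.pi * Complex.I / d)

/-- The ℚ-subspace of `ℚ^(d-1)` of tuples `(n_0, …, n_{d-2})` such that
`∑_j n_j ζ_d^{j(β+1)} = 0` for every `β` with `0 ≤ β ≤ d-2` satisfying `cond β`. -/
noncomputable def solSpace (d : ℕ) (cond : ℕ → Prop) [DecidablePred cond] :
    Submodule ℚ (Fin (d - 1) → ℚ) :=
  LinearMap.ker (LinearMap.pi (fun β : Fin (d - 1) =>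
    if cond (β : ℕ) then
      ∑ j : Fin (d - 1),
        (zeta d ^ ((j : ℕ) * ((β : ℕ) + 1))) •
          ((Algebra.linearMap ℚ ℂ).comp (LinearMap.proj j))
    else 0))

open Polynomial

lemma zeta_pow_prim {d : ℕ} (hd : d ≠ 0) {α : ℕ} (hα : α ≠ 0) :
    IsPrimitiveRoot (zeta d ^ α) (d / Nat.gcd α d) := by
  have hprim : IsPrimitiveRoot (zeta d) d := Complex.isPrimitiveRoot_exp d hd
  have hg : Nat.gcd α d ∣ d := Nat.gcd_dvd_right α d
  have hg0 : 0 < Nat.gcd α d := Nat.gcd_pos_of_pos_left d (Nat.pos_of_ne_zero hα)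
  have h1 : IsPrimitiveRoot (zeta d ^ Nat.gcd α d) (d / Nat.gcd α d) :=
    hprim.pow (Nat.pos_of_ne_zero hd) (Nat.mul_div_cancel' hg).symm
  have h2 := h1.pow_of_coprime (α / Nat.gcd α d)
    (Nat.coprime_div_gcd_div_gcd hg0)
  rwa [← pow_mul, Nat.mul_div_cancel' (Nat.gcd_dvd_left α d)] at h2

lemma aeval_zero_iff_cyclotomic_dvd {e : ℕ} (he : 0 < e) {μ : ℂ}
    (hμ : IsPrimitiveRoot μ e) (P : ℚ[X]) :
    aeval μ P = 0 ↔ cyclotomic e ℚ ∣ P := by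
  rw [cyclotomic_eq_minpoly_rat hμ he]
  constructor
  · exact minpoly.dvd ℚ μ
  · rintro ⟨c, rfl⟩
    rw [map_mul, minpoly.aeval, zero_mul]

lemma finrank_degLT_inter_span {F : ℚ[X]} (hF : F ≠ 0) {n : ℕ} (hn : F.natDegree ≤ n) :
    Module.finrank ℚ
      ↥(degreeLT ℚ n ⊓ Submodule.restrictScalars ℚ (Ideal.span {F})) = n - F.natDegree := by
  set N := F.natDegree
  set W : Submodule ℚ ℚ[X] := degreeLT ℚ n ⊓ Submodule.restrictScalars ℚ (Ideal.span {F})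
  set μ : degreeLT ℚ (n - N) →ₗ[ℚ] ℚ[X] :=
    (LinearMap.mulLeft ℚ F).comp (degreeLT ℚ (n - N)).subtype with hμ
  have hμ_apply : ∀ P : degreeLT ℚ (n - N), μ P = F * (P : ℚ[X]) := fun P => rfl
  have hinj : Function.Injective μ := by
    intro x y hxy
    exact Subtype.ext (mul_left_cancel₀ hF (by simpa [hμ_apply] using hxy))
  have hrange : LinearMap.range μ = W := by
    apply le_antisymm
    · rintro x ⟨P, rfl⟩
      rw [hμ_apply, Submodule.mem_inf]
      constructor
      · rw [mem_degreeLT]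
        rcases eq_or_ne (P : ℚ[X]) 0 with h0 | h0
        · rw [h0, mul_zero, degree_zero]
          exact WithBot.bot_lt_coe _
        · have hFP : F * (P : ℚ[X]) ≠ 0 := mul_ne_zero hF h0
          rw [← natDegree_lt_iff_degree_lt hFP, natDegree_mul hF h0]
          have : (P : ℚ[X]).natDegree < n - N := by
            rw [natDegree_lt_iff_degree_lt h0]
            exact mem_degreeLT.mp P.2
          omega
      · exact Ideal.mem_span_singleton.mpr ⟨(P : ℚ[X]), rfl⟩
    · rintro x ⟨hx1, hx2⟩
      obtain ⟨P, rfl⟩ := Ideal.mem_span_singleton.mp hx2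
      have hP : P ∈ degreeLT ℚ (n - N) := by
        rw [mem_degreeLT]
        rcases eq_or_ne P 0 with rfl | h0
        · rw [degree_zero]; exact WithBot.bot_lt_coe _
        · have hFP : F * P ≠ 0 := mul_ne_zero hF h0
          rw [← natDegree_lt_iff_degree_lt h0]
          have := mem_degreeLT.mp hx1
          rw [← natDegree_lt_iff_degree_lt hFP, natDegree_mul hF h0] at this
          omega
      exact ⟨⟨P, hP⟩, rfl⟩
  calc Module.finrank ℚ W = Module.finrank ℚ (LinearMap.range μ) := by rw [hrange]
    _ = Module.finrank ℚ (degreeLT ℚ (n - N)) := LinearMap.finrank_range_of_inj hinj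
    _ = n - N := by
        rw [(degreeLTEquiv ℚ (n - N)).finrank_eq, Module.finrank_fin_fun]

lemma mem_solSpace_iff {d : ℕ} (cond : ℕ → Prop) [DecidablePred cond] (v : Fin (d - 1) → ℚ) :
    v ∈ solSpace d cond ↔ ∀ β : Fin (d - 1), cond (β : ℕ) →
      aeval (zeta d ^ ((β : ℕ) + 1)) (∑ j : Fin (d - 1), monomial (j : ℕ) (v j)) = 0 := by
  rw [solSpace, LinearMap.mem_ker, funext_iff]
  refine forall_congr' fun β => ?_
  rw [LinearMap.pi_apply, Pi.zero_apply]
  by_cases hc : cond (β : ℕ)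
  · rw [if_pos hc]
    have h1 : (∑ j : Fin (d - 1), (zeta d ^ ((j : ℕ) * ((β : ℕ) + 1))) •
          ((Algebra.linearMap ℚ ℂ).comp (LinearMap.proj j))) v
        = aeval (zeta d ^ ((β : ℕ) + 1)) (∑ j : Fin (d - 1), monomial (j : ℕ) (v j)) := by
      rw [map_sum, LinearMap.sum_apply]
      refine Finset.sum_congr rfl fun j _ => ?_
      rw [LinearMap.smul_apply, LinearMap.comp_apply, Algebra.linearMap_apply,
        aeval_monomial, ← pow_mul, Nat.mul_comm]
      simp [smul_eq_mul, mul_comm]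
    rw [h1]
    simp [hc]
  · simp [hc]

theorem stmt3 (d p m : ℕ) (hd : 2 ≤ d) (hp : 2 ≤ p) (hm : 2 ≤ m) :
    Module.finrank ℚ
      (solSpace d (fun β => ((β : ℚ) + 1) / d < 1 - 1 / m - 1 / p))
      = ∑ d' ∈ d.divisors.filter (fun d' => 2 ≤ d' ∧ d' * (p * m - m - p) ≤ p * m),
          Nat.totient d' := by
  classical
  have hd0 : d ≠ 0 := by omega
  have hpm : m + p ≤ p * m := by nlinarith
  set n := d - 1 with hn
  -- ℕ-version of the condition on β
  have cond_iff : ∀ β : ℕ, (((β : ℚ) + 1) / d < 1 - 1 / m - 1 / p) ↔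
      ((β + 1) * (p * m) + d * m + d * p < d * (p * m)) := by
    intro β
    have hdq : (0 : ℚ) < d := by exact_mod_cast Nat.pos_of_ne_zero hd0
    have hpq : (0 : ℚ) < p := by exact_mod_cast (by omega : 0 < p)
    have hmq : (0 : ℚ) < m := by exact_mod_cast (by omega : 0 < m)
    have heq : (1 - 1 / (m : ℚ) - 1 / p) * d * (p * m) = d * (p * m) - d * p - d * m := by
      field_simp
    constructor
    · intro h
      rw [div_lt_iff₀ hdq] at h
      have h2 := mul_lt_mul_of_pos_right h (mul_pos hpq hmq)
      rw [heq] at h2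
      have h3 : ((β : ℚ) + 1) * (p * m) + d * m + d * p < d * (p * m) := by linarith
      exact_mod_cast h3
    · intro h
      have h2 : ((β : ℚ) + 1) * (p * m) + d * m + d * p < d * (p * m) := by exact_mod_cast h
      rw [div_lt_iff₀ hdq]
      have h3 : ((β : ℚ) + 1) * (p * m) < (1 - 1 / (m : ℚ) - 1 / p) * d * (p * m) := by
        rw [heq]; linarith
      exact lt_of_mul_lt_mul_right h3 (by positivity)
  -- the "bad divisor" set
  set D : Finset ℕ := d.divisors.filter
    (fun d' => 2 ≤ d' ∧ p * m + d' * m + d' * p < d' * (p * m)) with hD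
  set F : ℚ[X] := ∏ d' ∈ D, cyclotomic d' ℚ with hF
  set N : ℕ := ∑ d' ∈ D, Nat.totient d' with hN
  have hFmonic : F.Monic := monic_prod_of_monic _ _ fun d' _ => cyclotomic.monic d' ℚ
  have hF0 : F ≠ 0 := hFmonic.ne_zero
  have hFdeg : F.natDegree = N := by
    rw [hF, natDegree_prod _ _ fun d' _ => cyclotomic_ne_zero d' ℚ]
    exact Finset.sum_congr rfl fun d' _ => natDegree_cyclotomic d' ℚ
  -- key divisibility characterization
  have hchar : ∀ P : ℚ[X],
      (∀ β : Fin n, (((β : ℚ) + 1) / d < 1 - 1 / m - 1 / p) →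
        aeval (zeta d ^ ((β : ℕ) + 1)) P = 0) ↔ F ∣ P := by
    intro P
    constructor
    · intro h
      refine Finset.prod_dvd_of_coprime (fun a _ b _ hab => cyclotomic.isCoprime_rat hab)
        (fun d' hd' => ?_)
      have hd'' := hd'
      rw [hD, Finset.mem_filter, Nat.mem_divisors] at hd''
      obtain ⟨⟨hdvd, -⟩, h2, hlt⟩ := hd''
      set α := d / d' with hα
      have hd'0 : 0 < d' := by omega
      have hαd' : α * d' = d := Nat.div_mul_cancel hdvd
      have hα0 : 0 < α := by
        rcases Nat.eq_zero_or_pos α with h0 | h0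
        · rw [h0, zero_mul] at hαd'; omega
        · exact h0
      have hαlt : α < d := by
        rcases Nat.lt_or_ge α d with h0 | h0
        · exact h0
        · nlinarith
      have hβ : α - 1 < n := by omega
      have hcondβ : (((((⟨α - 1, hβ⟩ : Fin n) : ℕ) : ℚ) + 1) / d < 1 - 1 / m - 1 / p) := by
        rw [cond_iff]
        have he : (α - 1) + 1 = α := by omega
        show ((α - 1) + 1) * (p * m) + d * m + d * p < d * (p * m)
        rw [he]
        calc α * (p * m) + d * m + d * p
            = α * (p * m + d' * m + d' * p) := by rw [← hαd']; ring
          _ < α * (d' * (p * m)) := by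
              exact Nat.mul_lt_mul_of_pos_left hlt hα0
          _ = d * (p * m) := by rw [← hαd']; ring
      have h0 := h ⟨α - 1, hβ⟩ hcondβ
      have he : ((⟨α - 1, hβ⟩ : Fin n) : ℕ) + 1 = α := by
        show (α - 1) + 1 = α; omega
      rw [he] at h0
      have hgcd : Nat.gcd α d = α := Nat.gcd_eq_left (Nat.div_dvd_of_dvd hdvd)
      have hprim : IsPrimitiveRoot (zeta d ^ α) d' := by
        have h1 := zeta_pow_prim hd0 (by omega : α ≠ 0)
        rw [hgcd, Nat.div_div_self hdvd hd0] at h1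
        exact h1
      exact (aeval_zero_iff_cyclotomic_dvd hd'0 hprim P).mp h0
    · intro hFP β hβc
      set α := (β : ℕ) + 1 with hαdef
      have hα0 : α ≠ 0 := by omega
      set g := Nat.gcd α d with hg
      have hg0 : 0 < g := Nat.gcd_pos_of_pos_left d (by omega)
      have hgd : g ∣ d := Nat.gcd_dvd_right α d
      set e := d / g with he
      have hge : g * e = d := Nat.mul_div_cancel' hgd
      have hprim : IsPrimitiveRoot (zeta d ^ α) e := zeta_pow_prim hd0 hα0
      have hgα : g ≤ α := Nat.le_of_dvd (by omega) (Nat.gcd_dvd_left α d)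
      have hcond' : α * (p * m) + d * m + d * p < d * (p * m) := by
        have := (cond_iff (β : ℕ)).mp hβc
        exact this
      have hαd : α < d := by
        have : (β : ℕ) < n := β.2
        omega
      have he2 : 2 ≤ e := by
        rcases Nat.lt_or_ge e 2 with h0 | h0
        · interval_cases e <;> omega
        · exact h0
      have hekey : p * m + e * m + e * p < e * (p * m) := by
        have h2 : g * (p * m + e * m + e * p) < g * (e * (p * m)) := by
          calc g * (p * m + e * m + e * p)
              = g * (p * m) + d * m + d * p := by rw [← hge]; ring
            _ ≤ α * (p * m) + d * m + d * p := by
                exact Nat.add_le_add_right (Nat.add_le_add_right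
                  (Nat.mul_le_mul_right _ hgα) _) _
            _ < d * (p * m) := hcond'
            _ = g * (e * (p * m)) := by rw [← hge]; ring
        exact Nat.lt_of_mul_lt_mul_left h2
      have heD : e ∈ D := by
        rw [hD, Finset.mem_filter, Nat.mem_divisors]
        exact ⟨⟨Nat.div_dvd_of_dvd hgd, hd0⟩, he2, hekey⟩
      rw [aeval_zero_iff_cyclotomic_dvd (by omega) hprim]
      exact dvd_trans (Finset.dvd_prod_of_mem (fun d' => cyclotomic d' ℚ) heD) hFP
  -- identify the solution space
  set W : Submodule ℚ ℚ[X] := degreeLT ℚ n ⊓ Submodule.restrictScalars ℚ (Ideal.span {F})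
    with hW
  have hsol : solSpace d (fun β => ((β : ℚ) + 1) / d < 1 - 1 / m - 1 / p)
      = Submodule.map (degreeLTEquiv ℚ n : degreeLT ℚ n →ₗ[ℚ] (Fin n → ℚ))
          (Submodule.comap (degreeLT ℚ n).subtype W) := by
    ext v
    rw [mem_solSpace_iff, Submodule.mem_map_equiv, Submodule.mem_comap, Submodule.subtype_apply]
    have hcoe : (((degreeLTEquiv ℚ n).symm v : degreeLT ℚ n) : ℚ[X])
        = ∑ j : Fin n, monomial (j : ℕ) (v j) := rfl
    rw [Submodule.mem_inf]
    constructor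
    · intro h
      refine ⟨((degreeLTEquiv ℚ n).symm v).2, ?_⟩
      rw [Submodule.restrictScalars_mem, Ideal.mem_span_singleton, hcoe]
      exact (hchar _).mp h
    · rintro ⟨-, h2⟩
      rw [Submodule.restrictScalars_mem, Ideal.mem_span_singleton, hcoe] at h2
      exact (hchar _).mpr h2
  -- dimension count
  have hDsub : D ⊆ d.divisors.erase 1 := by
    intro x hx
    rw [hD, Finset.mem_filter] at hx
    exact Finset.mem_erase.mpr ⟨by omega, hx.1⟩
  have hsum_all : ∑ d' ∈ d.divisors.erase 1, Nat.totient d' = d - 1 := by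
    have h1 : (1 : ℕ) ∈ d.divisors := Nat.one_mem_divisors.mpr hd0
    have h2 := Finset.sum_erase_add d.divisors Nat.totient h1
    rw [Nat.sum_totient, Nat.totient_one] at h2
    omega
  have hNle : N ≤ n := by
    rw [hN]
    calc ∑ d' ∈ D, Nat.totient d' ≤ ∑ d' ∈ d.divisors.erase 1, Nat.totient d' :=
          Finset.sum_le_sum_of_subset hDsub
      _ = d - 1 := hsum_all
  have h1 : Module.finrank ℚ
      (solSpace d (fun β => ((β : ℚ) + 1) / d < 1 - 1 / m - 1 / p)) = n - N := by
    rw [hsol, LinearEquiv.finrank_map_eq,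
      (Submodule.comapSubtypeEquivOfLe inf_le_left).finrank_eq,
      finrank_degLT_inter_span hF0 (by rw [hFdeg]; exact hNle), hFdeg]
  -- final counting
  have harith : ∀ x ∈ d.divisors, 2 ≤ x →
      (¬ (x * (p * m - m - p) ≤ p * m) ↔ p * m + x * m + x * p < x * (p * m)) := by
    intro x _ _
    have hxeq : x * (p * m) = x * (p * m - m - p) + x * m + x * p := by
      have h : p * m - m - p + m + p = p * m := by omega
      calc x * (p * m) = x * ((p * m - m - p) + m + p) := by rw [h]
        _ = x * (p * m - m - p) + x * m + x * p := by ring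
    rw [not_le, hxeq]
    simp only [add_lt_add_iff_right]
  have hpart : (∑ d' ∈ d.divisors.filter
        (fun d' => 2 ≤ d' ∧ d' * (p * m - m - p) ≤ p * m), Nat.totient d') + N = d - 1 := by
    rw [hN, ← hsum_all]
    have hANB : d.divisors.filter (fun d' => 2 ≤ d' ∧ d' * (p * m - m - p) ≤ p * m)
        = (d.divisors.erase 1).filter (fun d' => d' * (p * m - m - p) ≤ p * m) := by
      ext x
      simp only [Finset.mem_filter, Finset.mem_erase]
      constructor
      · rintro ⟨h1, h2, h3⟩; exact ⟨⟨by omega, h1⟩, h3⟩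
      · rintro ⟨⟨h1, h2⟩, h3⟩
        have := Nat.pos_of_mem_divisors h2
        exact ⟨h2, by omega, h3⟩
    have hDNB : D = (d.divisors.erase 1).filter
        (fun d' => ¬ (d' * (p * m - m - p) ≤ p * m)) := by
      ext x
      rw [hD]
      simp only [Finset.mem_filter, Finset.mem_erase]
      constructor
      · rintro ⟨h1, h2, h3⟩
        exact ⟨⟨by omega, h1⟩, by rw [harith x h1 h2]; exact h3⟩
      · rintro ⟨⟨h1, h2⟩, h3⟩
        have hx1 := Nat.pos_of_mem_divisors h2
        have hx2 : 2 ≤ x := by omega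
        exact ⟨h2, hx2, (harith x h2 hx2).mp h3⟩
    rw [hANB, hDNB]
    exact Finset.sum_filter_add_sum_filter_not _ _ _
  rw [h1]
  omega
end

section
/- Let p be a prime number, let d ≥ 2 be an integer not divisible by p, and let m ≥ 2 be an integer. For a family (n_{ij}) of rational numbers indexed by 0 ≤ i ≤ p−2 and 0 ≤ j ≤ d−2, the following are equivalent: (a) ∑_{i=0}^{p−2} ∑_{j=0}^{d−2} n_{ij} ζ_p^{i a} ζ_d^{j b} = 0 for all integers a, b with 1 ≤ a ≤ p−1, 1 ≤ b ≤ d−1 and a/p + b/d < 1 − 1/m; (b) for every i with 0 ≤ i ≤ p−2, ∑_{j=0}^{d−2} n_{ij} ζ_d^{j b} = 0 for all integers b with 1 ≤ b ≤ d−1 and b/d < 1 − 1/m − 1/p. -/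
/-!
For coprime `m, n`, the field `ℚ(ζ_n, ζ_m)` contains a primitive `mn`-th root of unity, so its
degree `φ(n) · [ℚ(ζ_n, ζ_m) : ℚ(ζ_n)]` is at least `φ(mn) = φ(m) φ(n)`; hence `ζ_m` keeps its full
degree `φ(m)` over `ℚ(ζ_n)`. For `m = p ∤ d = n` this makes `1, ζ_p, …, ζ_p^{p-2}` linearly
independent over `ℚ(ζ_d)`. The sum in (a) is `∑ᵢ cᵢ(b) ζ_p^{ia}` with coefficients
`cᵢ(b) = ∑ⱼ n_{ij} ζ_d^{jb} ∈ ℚ(ζ_d)`, so (a) at `a = 1` forces every `cᵢ(b)` to vanish, which is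
(b); conversely (b) kills every `cᵢ(b)` that (a) needs, because `a ≥ 1`.
-/

open scoped BigOperators

open IntermediateField Polynomial

namespace IsPrimitiveRoot

variable {K : Type*} [Field K] {ζ η : K} {m n : ℕ}

theorem natDegree_minpoly_le_totient {F : Type*} [Field F] [Algebra F K]
    (hζ : IsPrimitiveRoot ζ m) (hm : 0 < m) : (minpoly F ζ).natDegree ≤ m.totient := by
  have hroot : aeval ζ (cyclotomic m F) = 0 := by
    simpa [aeval_def, eval₂_eq_eval_map, IsRoot.def] using hζ.isRoot_cyclotomic hm
  calc (minpoly F ζ).natDegree ≤ (cyclotomic m F).natDegree :=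
        natDegree_le_of_dvd (minpoly.dvd F ζ hroot) (cyclotomic_ne_zero m F)
    _ = m.totient := natDegree_cyclotomic m F

variable [CharZero K]

theorem finrank_adjoin_rat (hη : IsPrimitiveRoot η n) (hn : 0 < n) :
    Module.finrank ℚ ℚ⟮η⟯ = n.totient := by
  rw [adjoin.finrank (hη.isIntegral hn).tower_top, ← cyclotomic_eq_minpoly_rat hη hn,
    natDegree_cyclotomic]

theorem totient_lcm_le_finrank_adjoin_pair (hζ : IsPrimitiveRoot ζ m) (hη : IsPrimitiveRoot η n)
    (hm : 0 < m) (hn : 0 < n) :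
    (m.lcm n).totient ≤ Module.finrank ℚ ℚ⟮η, ζ⟯ := by
  have : FiniteDimensional ℚ ℚ⟮η, ζ⟯ :=
    finiteDimensional_adjoin (by
      rintro x (rfl | rfl)
      exacts [(hη.isIntegral hn).tower_top, (hζ.isIntegral hm).tower_top])
  exact lcm_totient_le_finrank (x := (⟨ζ, subset_adjoin ℚ _ (by simp)⟩ : ℚ⟮η, ζ⟯))
    (y := (⟨η, subset_adjoin ℚ _ (by simp)⟩ : ℚ⟮η, ζ⟯))
    (coe_submonoidClass_iff.mp hζ) (coe_submonoidClass_iff.mp hη)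
    (cyclotomic.irreducible_rat (Nat.lcm_pos hm hn))

theorem natDegree_minpoly_adjoin_of_coprime (hζ : IsPrimitiveRoot ζ m) (hη : IsPrimitiveRoot η n)
    (hm : 0 < m) (hn : 0 < n) (hmn : m.Coprime n) :
    (minpoly ℚ⟮η⟯ ζ).natDegree = m.totient := by
  have hζint : IsIntegral ℚ⟮η⟯ ζ := (hζ.isIntegral hm).tower_top
  have : FiniteDimensional ℚ ℚ⟮η⟯ := adjoin.finiteDimensional (hη.isIntegral hn).tower_top
  have : FiniteDimensional ℚ⟮η⟯ ℚ⟮η⟯⟮ζ⟯ := adjoin.finiteDimensional hζint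
  have htower : n.totient * (minpoly ℚ⟮η⟯ ζ).natDegree = Module.finrank ℚ ℚ⟮η, ζ⟯ := by
    rw [← adjoin_simple_adjoin_simple, ← finrank_adjoin_rat hη hn, ← adjoin.finrank hζint]
    exact Module.finrank_mul_finrank ℚ ℚ⟮η⟯ ℚ⟮η⟯⟮ζ⟯
  have hlow := totient_lcm_le_finrank_adjoin_pair hζ hη hm hn
  rw [← htower, hmn.lcm_eq_mul, Nat.totient_mul hmn, mul_comm] at hlow
  exact le_antisymm (hζ.natDegree_minpoly_le_totient hm)
    (Nat.le_of_mul_le_mul_left hlow (Nat.totient_pos.2 hn))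

theorem linearIndependent_pow_of_coprime (hζ : IsPrimitiveRoot ζ m) (hη : IsPrimitiveRoot η n)
    (hm : 0 < m) (hn : 0 < n) (hmn : m.Coprime n) :
    LinearIndependent ℚ⟮η⟯ (fun i : Fin m.totient => ζ ^ (i : ℕ)) := by
  rw [← hζ.natDegree_minpoly_adjoin_of_coprime hη hm hn hmn]
  exact linearIndependent_pow ζ

end IsPrimitiveRoot

theorem IntermediateField.eq_zero_of_sum_mul_eq_zero {F K : Type*} [Field F] [Field K]
    [Algebra F K] {L : IntermediateField F K} {ι : Type*} [Fintype ι] {v : ι → K}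
    (hv : LinearIndependent L v) {c : ι → K} (hc : ∀ i, c i ∈ L) (h : ∑ i, c i * v i = 0)
    (i : ι) : c i = 0 :=
  congrArg Subtype.val <| Fintype.linearIndependent_iff.mp hv (fun i => ⟨c i, hc i⟩) h i

theorem zeta_isPrimitiveRoot {d : ℕ} (hd : d ≠ 0) : IsPrimitiveRoot (zeta d) d :=
  Complex.isPrimitiveRoot_exp d hd

theorem linearIndependent_zeta_pow {p d : ℕ} (hp : p.Prime) (hpd : ¬ p ∣ d) :
    LinearIndependent ℚ⟮zeta d⟯ (fun i : Fin (p - 1) => zeta p ^ (i : ℕ)) := by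
  have hd : d ≠ 0 := by rintro rfl; exact hpd (dvd_zero p)
  rw [← Nat.totient_prime hp]
  exact (zeta_isPrimitiveRoot hp.ne_zero).linearIndependent_pow_of_coprime
    (zeta_isPrimitiveRoot hd) hp.pos (Nat.pos_of_ne_zero hd) (hp.coprime_iff_not_dvd.2 hpd)

theorem stmt4_general (p d m : ℕ) (hp : p.Prime) (hpd : ¬ p ∣ d)
    (n : Fin (p - 1) → Fin (d - 1) → ℚ) :
    (∀ a b : ℕ, 1 ≤ a → a ≤ p - 1 → 1 ≤ b → b ≤ d - 1 →
        (a : ℚ) / p + (b : ℚ) / d < 1 - 1 / m →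
        ∑ i : Fin (p - 1), ∑ j : Fin (d - 1),
          (n i j : ℂ) * zeta p ^ ((i : ℕ) * a) * zeta d ^ ((j : ℕ) * b) = 0)
    ↔ (∀ i : Fin (p - 1), ∀ b : ℕ, 1 ≤ b → b ≤ d - 1 →
        (b : ℚ) / d < 1 - 1 / m - 1 / p →
        ∑ j : Fin (d - 1), (n i j : ℂ) * zeta d ^ ((j : ℕ) * b) = 0) := by
  constructor
  · intro H i b hb1 hb2 hbd
    have hsum := H 1 b le_rfl (by have := hp.two_le; omega) hb1 hb2 (by push_cast; linarith)
    refine IntermediateField.eq_zero_of_sum_mul_eq_zero (linearIndependent_zeta_pow hp hpd)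
      (c := fun i => ∑ j, (n i j : ℂ) * zeta d ^ ((j : ℕ) * b))
      (fun _ => sum_mem fun j _ => mul_mem (SubfieldClass.ratCast_mem _ _)
        (pow_mem (mem_adjoin_simple_self ℚ (zeta d)) _)) ?_ i
    rw [← hsum]
    simp only [Finset.sum_mul, mul_one]
    exact Finset.sum_congr rfl fun i _ => Finset.sum_congr rfl fun j _ => by ring
  · intro H a b ha1 _ hb1 hb2 hab
    have hpa : (1 : ℚ) / p ≤ a / p := by gcongr; exact_mod_cast ha1
    refine Finset.sum_eq_zero fun i _ => ?_
    rw [← zero_mul (zeta p ^ ((i : ℕ) * a)), ← H i b hb1 hb2 (by linarith), Finset.sum_mul]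
    exact Finset.sum_congr rfl fun j _ => by ring

theorem stmt4 (p d m : ℕ) (hp : p.Prime) (hd : 2 ≤ d) (hpd : ¬ p ∣ d) (hm : 2 ≤ m)
    (n : Fin (p - 1) → Fin (d - 1) → ℚ) :
    (∀ a b : ℕ, 1 ≤ a → a ≤ p - 1 → 1 ≤ b → b ≤ d - 1 →
        (a : ℚ) / p + (b : ℚ) / d < 1 - 1 / m →
        ∑ i : Fin (p - 1), ∑ j : Fin (d - 1),
          (n i j : ℂ) * zeta p ^ ((i : ℕ) * a) * zeta d ^ ((j : ℕ) * b) = 0)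
    ↔ (∀ i : Fin (p - 1), ∀ b : ℕ, 1 ≤ b → b ≤ d - 1 →
        (b : ℚ) / d < 1 - 1 / m - 1 / p →
        ∑ j : Fin (d - 1), (n i j : ℂ) * zeta d ^ ((j : ℕ) * b) = 0) :=
  stmt4_general p d m hp hpd n
end

section
/- For every real number λ with 0 < λ < 2, one has 6·(λ²−λ+1)·F(4/3, −4/3, 8/3; 1−λ) − (2/3)·(λ+1)·(5λ²−8λ+5)·F(4/3, −1/3, 8/3; 1−λ) = (10/3)·λ^{5/3}. -/
/-!
Put `z = 1 - λ`. The binomial series is hypergeometric, `(1 - z) ^ a = F(-a, 1, 1; z)`, so the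
claim is an identity between power series in `z`. The coefficients of `F(4/3, -1/3, 8/3; z)` are
`1 - 3n/4` times those of `F(4/3, -4/3, 8/3; z)`, so every Taylor coefficient of the left-hand side
is a combination of four consecutive terms of one hypergeometric sequence. A rational-function
identity then shows that these coefficients satisfy the recurrence `(n + 1) c (n + 1) = (n - 5/3) c n`
of the Taylor coefficients of `(1 - z) ^ (5/3)`. Both sequences start at `10/3`, so they coincide.
-/

open scoped BigOperators

/-- The Gauss hypergeometric series `F(a,b,c;z)`. -/
noncomputable def hypF (a b c z : ℝ) : ℝ :=
  ∑' n : ℕ,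
    (Polynomial.eval a (ascPochhammer ℝ n) * Polynomial.eval b (ascPochhammer ℝ n) /
      (Polynomial.eval c (ascPochhammer ℝ n) * (n.factorial : ℝ))) * z ^ n

section Coefficients

variable {𝕂 : Type*} [Field 𝕂]

@[simp]
theorem ordinaryHypergeometricCoefficient_zero (a b c : 𝕂) :
    ordinaryHypergeometricCoefficient a b c 0 = 1 := by
  simp [ordinaryHypergeometricCoefficient]

theorem ordinaryHypergeometricCoefficient_succ (a b c : 𝕂) (n : ℕ) :
    ordinaryHypergeometricCoefficient a b c (n + 1) =
      ordinaryHypergeometricCoefficient a b c n * ((a + n) * (b + n) / ((c + n) * (n + 1))) := by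
  simp only [ordinaryHypergeometricCoefficient, ascPochhammer_succ_eval, Nat.factorial_succ,
    Nat.cast_mul, Nat.cast_succ, mul_inv, div_eq_mul_inv]
  ring

open Polynomial in
theorem ordinaryHypergeometricCoefficient_add_one_mul (a b c : 𝕂) (n : ℕ) :
    ordinaryHypergeometricCoefficient a (b + 1) c n * b =
      ordinaryHypergeometricCoefficient a b c n * (b + n) := by
  have h : b * (ascPochhammer 𝕂 n).eval (b + 1) = (ascPochhammer 𝕂 n).eval b * (b + n) := by
    rw [← ascPochhammer_succ_eval, ascPochhammer_succ_left, eval_mul, eval_comp]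
    simp
  simp only [ordinaryHypergeometricCoefficient]
  linear_combination ((n.factorial : 𝕂)⁻¹ * (ascPochhammer 𝕂 n).eval a *
    ((ascPochhammer 𝕂 n).eval c)⁻¹) * h

end Coefficients

section Convergence

variable {𝕂 : Type*} [RCLike 𝕂]

theorem one_le_ordinaryHypergeometricSeries_radius {a b c : 𝕂} (hc : ∀ k : ℕ, (k : 𝕂) ≠ -c) :
    1 ≤ (ordinaryHypergeometricSeries 𝕂 a b c).radius := by
  by_cases ha : ∃ k : ℕ, (k : 𝕂) = -a
  · obtain ⟨k, hk⟩ := ha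
    rw [show a = -k by rw [hk, neg_neg], ordinaryHypergeometric_radius_top_of_neg_nat₁]
    exact le_top
  by_cases hb : ∃ k : ℕ, (k : 𝕂) = -b
  · obtain ⟨k, hk⟩ := hb
    rw [show b = -k by rw [hk, neg_neg], ordinaryHypergeometric_radius_top_of_neg_nat₂]
    exact le_top
  push Not at ha hb
  rw [ordinaryHypergeometricSeries_radius_eq_one _ _ _ _ fun k => ⟨ha k, hb k, hc k⟩]

theorem mem_eball_zero_one {z : 𝕂} (hz : ‖z‖ < 1) : z ∈ Metric.eball (0 : 𝕂) 1 := by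
  rwa [← ENNReal.ofReal_one, Metric.eball_ofReal, mem_ball_zero_iff]

theorem hasSum_ordinaryHypergeometric {a b c z : 𝕂} (hc : ∀ k : ℕ, (k : 𝕂) ≠ -c)
    (hz : ‖z‖ < 1) :
    HasSum (fun n => ordinaryHypergeometricCoefficient a b c n * z ^ n) (₂F₁ a b c z) := by
  have h := (ordinaryHypergeometricSeries 𝕂 a b c).hasSum
    (Metric.eball_subset_eball (one_le_ordinaryHypergeometricSeries_radius hc)
      (mem_eball_zero_one hz))
  rwa [ordinaryHypergeometricSeries_apply_eq'] at h

end Convergence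

theorem hasSum_one_sub_rpow (a : ℝ) {z : ℝ} (hz : |z| < 1) :
    HasSum (fun n => ordinaryHypergeometricCoefficient (-a) 1 1 n * z ^ n) ((1 - z) ^ a) := by
  have h := Real.one_add_rpow_hasFPowerSeriesOnBall_zero (a := a) |>.hasSum (y := -z)
    (mem_eball_zero_one (by rwa [norm_neg, Real.norm_eq_abs]))
  rw [binomialSeries_eq_ordinaryHypergeometricSeries (b := (1 : ℝ)) (by norm_cast; simp)] at h
  simp only [FormalMultilinearSeries.compContinuousLinearMap_apply, Function.comp_def, neg_apply,
    ContinuousLinearMap.id_apply, neg_neg] at h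
  rwa [ordinaryHypergeometricSeries_apply_eq', zero_add, ← sub_eq_add_neg] at h

theorem hypF_eq_ordinaryHypergeometric (a b c z : ℝ) : hypF a b c z = ₂F₁ a b c z := by
  rw [hypF, ordinaryHypergeometric, ordinaryHypergeometric_sum_eq]
  refine tsum_congr fun n => ?_
  rw [smul_eq_mul, div_eq_mul_inv, mul_inv]
  ring

section Shift

variable {R : Type*}

def shiftSeq [Zero R] (f : ℕ → R) : ℕ → R
  | 0 => 0
  | n + 1 => f n

@[simp]
theorem shiftSeq_zero [Zero R] (f : ℕ → R) : shiftSeq f 0 = 0 := rfl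

@[simp]
theorem shiftSeq_succ [Zero R] (f : ℕ → R) (n : ℕ) : shiftSeq f (n + 1) = f n := rfl

theorem HasSum.shiftSeq_mul_pow [CommRing R] [TopologicalSpace R] [IsTopologicalRing R]
    {f : ℕ → R} {z S : R} (h : HasSum (fun n => f n * z ^ n) S) :
    HasSum (fun n => shiftSeq f n * z ^ n) (z * S) := by
  rw [← hasSum_nat_add_iff' 1]
  simpa [pow_succ, mul_left_comm, mul_comm] using h.mul_left z

end Shift

local notation "A" => ordinaryHypergeometricCoefficient (4 / 3 : ℝ) (-4 / 3) (8 / 3)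
local notation "B" => ordinaryHypergeometricCoefficient (4 / 3 : ℝ) (-1 / 3) (8 / 3)
local notation "C" => ordinaryHypergeometricCoefficient (-(5 / 3) : ℝ) 1 1

noncomputable def combinationCoeff (n : ℕ) : ℝ :=
  6 * (A n - shiftSeq A n + shiftSeq (shiftSeq A) n) -
    (8 / 3 * B n - 4 * shiftSeq B n + 8 * shiftSeq (shiftSeq B) n
      - 10 / 3 * shiftSeq (shiftSeq (shiftSeq B)) n)

theorem combinationCoeff_succ_mul (n : ℕ) :
    combinationCoeff (n + 1) * (n + 1) = combinationCoeff n * (n - 5 / 3) := by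
  have hB (k : ℕ) : B k = A k * (1 - 3 / 4 * k) := by
    have h := ordinaryHypergeometricCoefficient_add_one_mul (4 / 3 : ℝ) (-4 / 3) (8 / 3) k
    rw [show (-4 / 3 + 1 : ℝ) = -1 / 3 by norm_num] at h
    linear_combination (-3 / 4 : ℝ) * h
  rcases n with _ | _ | _ | m
  iterate 3 norm_num [combinationCoeff, ordinaryHypergeometricCoefficient_succ]
  simp only [combinationCoeff, shiftSeq_succ, hB, ordinaryHypergeometricCoefficient_succ]
  push_cast
  field_simp
  ring

theorem combinationCoeff_eq (n : ℕ) : combinationCoeff n = 10 / 3 * C n := by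
  induction n with
  | zero => norm_num [combinationCoeff]
  | succ n ih =>
    have hC := ordinaryHypergeometricCoefficient_succ (-(5 / 3) : ℝ) 1 1 n
    have hn : (n : ℝ) + 1 ≠ 0 := by positivity
    apply mul_right_cancel₀ hn
    rw [combinationCoeff_succ_mul, ih, hC]
    field_simp
    ring

theorem hypergeometric_combination {z : ℝ} (hz : |z| < 1) :
    6 * (1 - z + z ^ 2) * ₂F₁ (4 / 3 : ℝ) (-4 / 3) (8 / 3) z
      - (8 / 3 - 4 * z + 8 * z ^ 2 - 10 / 3 * z ^ 3) * ₂F₁ (4 / 3 : ℝ) (-1 / 3) (8 / 3) z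
      = 10 / 3 * (1 - z) ^ ((5 : ℝ) / 3) := by
  have hc : ∀ k : ℕ, (k : ℝ) ≠ -(8 / 3) := fun k =>
    ne_of_gt (by linarith [(Nat.cast_nonneg k : (0 : ℝ) ≤ k)])
  have hA := hasSum_ordinaryHypergeometric (a := 4 / 3) (b := -4 / 3) hc hz
  have hB := hasSum_ordinaryHypergeometric (a := 4 / 3) (b := -1 / 3) hc hz
  have hA1 := hA.shiftSeq_mul_pow
  have hB1 := hB.shiftSeq_mul_pow
  have hB2 := hB1.shiftSeq_mul_pow
  have hLHS := ((((hA.sub hA1).add hA1.shiftSeq_mul_pow).mul_left 6).sub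
    ((((hB.mul_left (8 / 3)).sub (hB1.mul_left 4)).add (hB2.mul_left 8)).sub
      (hB2.shiftSeq_mul_pow.mul_left (10 / 3)))).congr_fun
    (g := fun n => combinationCoeff n * z ^ n) fun n => by unfold combinationCoeff; ring
  have hRHS := ((hasSum_one_sub_rpow (5 / 3) hz).mul_left (10 / 3)).congr_fun
    (g := fun n => combinationCoeff n * z ^ n) fun n => by rw [combinationCoeff_eq, mul_assoc]
  linear_combination hLHS.unique hRHS

theorem stmt12 (l : ℝ) (h0 : 0 < l) (h2 : l < 2) :
    6 * (l ^ 2 - l + 1) * hypF (4 / 3) (-4 / 3) (8 / 3) (1 - l)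
      - (2 / 3) * (l + 1) * (5 * l ^ 2 - 8 * l + 5) * hypF (4 / 3) (-1 / 3) (8 / 3) (1 - l)
      = (10 / 3) * l ^ ((5 : ℝ) / 3) := by
  have h := hypergeometric_combination (z := 1 - l) (abs_lt.2 ⟨by linarith, by linarith⟩)
  rw [sub_sub_cancel] at h
  rw [hypF_eq_ordinaryHypergeometric, hypF_eq_ordinaryHypergeometric]
  linear_combination h
end
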